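/- arXiv:2011.04110 — 11 statements merged into one kernel-verified Lean document; each statement's English description precedes it below -/
import Mathlib

section
/- Let p be a prime and n a positive integer. If (X+1)^n = X^n + 1 in the polynomial ring F_p[X], then n is a power of p, i.e., n = p^m for some integer m ≥ 0. -/
/-!
Comparing coefficients of `X` shows that `p ∣ n` unless `n = 1`. Writing `n = p * k`, the identity
reads `((X + 1) ^ k) ^ p = (X ^ k + 1) ^ p`, and since Frobenius is injective on a reduced ring this
gives `(X + 1) ^ k = X ^ k + 1`; strong induction on `n` finishes.
-/

open Polynomial

instance Polynomial.isReduced {R : Type*} [CommRing R] [IsReduced R] : IsReduced R[X] := by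
  simp [isReduced_iff, Polynomial.isNilpotent_iff, Polynomial.ext_iff]

theorem add_one_pow_eq_of_add_one_pow_mul_eq {S : Type*} [CommRing S] [IsReduced S] (p : ℕ)
    [ExpChar S p] {x : S} {k : ℕ} (h : (x + 1) ^ (p * k) = x ^ (p * k) + 1) :
    (x + 1) ^ k = x ^ k + 1 := by
  apply frobenius_inj S p
  rw [frobenius_def, frobenius_def, ← pow_mul', h, add_pow_expChar, one_pow, ← pow_mul']

namespace Polynomial

theorem dvd_of_X_add_one_pow_eq {R : Type*} [Semiring R] (p : ℕ) [CharP R p] {n : ℕ}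
    (hn : n ≠ 1) (h : (X + 1 : R[X]) ^ n = X ^ n + 1) : p ∣ n := by
  have h1 := congrArg (coeff · 1) h
  simp only [coeff_X_add_one_pow, Nat.choose_one_right, coeff_add, coeff_X_pow, coeff_one,
    if_neg hn.symm, if_neg one_ne_zero, add_zero] at h1
  exact (CharP.cast_eq_zero_iff R p n).mp h1

theorem exists_eq_pow_of_X_add_one_pow_eq {R : Type*} [CommRing R] [IsReduced R] (p : ℕ)
    [hp : Fact p.Prime] [CharP R p] {n : ℕ} (h : (X + 1 : R[X]) ^ n = X ^ n + 1) :
    ∃ m, n = p ^ m := by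
  have : Nontrivial R := CharP.nontrivial_of_char_ne_one hp.out.ne_one
  induction n using Nat.strong_induction_on with
  | _ n ih =>
  obtain rfl | hn0 := eq_or_ne n 0
  · simp at h
  obtain rfl | hn1 := eq_or_ne n 1
  · exact ⟨0, rfl⟩
  obtain ⟨k, rfl⟩ := dvd_of_X_add_one_pow_eq p hn1 h
  have hk : k < p * k := lt_mul_left (Nat.pos_of_ne_zero (right_ne_zero_of_mul hn0)) hp.out.one_lt
  obtain ⟨m, rfl⟩ := ih k hk (add_one_pow_eq_of_add_one_pow_mul_eq p h)
  exact ⟨m + 1, (pow_succ' p m).symm⟩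

end Polynomial

theorem pow_eq_of_add_pow_char_general (p : ℕ) [Fact p.Prime] (n : ℕ)
    (h : (X + 1 : (ZMod p)[X]) ^ n = X ^ n + 1) :
    ∃ m : ℕ, n = p ^ m :=
  exists_eq_pow_of_X_add_one_pow_eq p h

/-- If `(X+1)^n = X^n + 1` in `F_p[X]`, then `n` is a power of `p`. -/
theorem pow_eq_of_add_pow_char (p : ℕ) [Fact p.Prime] (n : ℕ) (hn : 0 < n)
    (h : (X + 1 : (ZMod p)[X]) ^ n = X ^ n + 1) :
    ∃ m : ℕ, n = p ^ m :=
  pow_eq_of_add_pow_char_general p n h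
end

section
/- Let p be a prime and let n ≥ 1 be an integer, so that 2n+1 > 1 is odd. Suppose that C(2n+1, j+1) ≡ n · C(2n+1, j) (mod p) for all integers j with 0 < j < n−1. Then 2n+1 equals 3, 5, or 7, or there is a power q = p^m of p such that 2n+1 = q, or 2n+1 = 2q−1, or 2n+1 = 2q+1. -/
open Finset Nat

/-!
Iterating the hypothesis gives `C(2n+1, j) ≡ (2n+1)·n^(j-1)` for `1 ≤ j ≤ n-1`, and comparing
`j = 2` and `j = 3` with `3·C(2n+1, 3) = (2n-1)·C(2n+1, 2)` shows that `p` divides `2n+1`, `n` or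
`n+1`. By Lucas's theorem `C(2n+1, p^i)` is congruent to the `i`-th base-`p` digit of `2n+1`, so
for `p^i < n` that digit is `≡ (2n+1)·n^(p^i-1)`. Let `q = p^k` be the least power of `p` with
`n ≤ q`: the lowest `k` digits of `2n+1` are then all `0`, or `1` followed by `0`s, or all `p-1`,
i.e. `2n+1 ≡ 0, 1` or `-1 mod q`. Since `n ≤ q` and `2n+1` is odd, this leaves `2n+1 = q`,
`2q+1` or `2q-1`.
-/

theorem mod_pow_eq_sum_digit (N b k : ℕ) :
    N % b ^ k = ∑ i ∈ range k, b ^ i * (N / b ^ i % b) := by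
  induction k with
  | zero => simp [Nat.mod_one]
  | succ k ih => rw [Nat.mod_pow_succ, ih, sum_range_succ]

theorem natCast_choose_prime_pow {p : ℕ} [Fact p.Prime] (N i : ℕ) :
    ((N.choose (p ^ i) : ℕ) : ZMod p) = ((N / p ^ i : ℕ) : ZMod p) := by
  induction i generalizing N with
  | zero => simp
  | succ i ih =>
    have lucas : N.choose (p ^ (i + 1)) ≡
        (N % p).choose (p ^ (i + 1) % p) * (N / p).choose (p ^ (i + 1) / p) [MOD p] :=
      Choose.choose_modEq_choose_mod_mul_choose_div_nat
    rw [pow_succ, Nat.mul_mod_left, Nat.mul_div_cancel _ (Fact.out : p.Prime).pos,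
      Nat.choose_zero_right, one_mul] at lucas
    rw [pow_succ, (ZMod.natCast_eq_natCast_iff _ _ _).mpr lucas, ih, Nat.div_div_eq_div_mul,
      mul_comm p]

theorem eq_pow_mul_of_succ_eq_mul {M : Type*} [Monoid M] {f : ℕ → M} {a : M} {m : ℕ}
    (h : ∀ j, 0 < j → j < m → f (j + 1) = a * f j) {j : ℕ} (hj : 0 < j) (hjm : j ≤ m) :
    f j = a ^ (j - 1) * f 1 := by
  induction j with
  | zero => omega
  | succ j ih =>
    rcases Nat.eq_zero_or_pos j with rfl | hj
    · simp
    rw [h j hj (by omega), ih hj (by omega), ← mul_assoc, ← pow_succ' a (j - 1),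
      Nat.sub_add_cancel hj, Nat.add_sub_cancel]

theorem choose_two_two_mul_add_one (n : ℕ) : (2 * n + 1).choose 2 = (2 * n + 1) * n := by
  rw [Nat.choose_two_right, Nat.add_sub_cancel, mul_comm 2 n, ← mul_assoc,
    Nat.mul_div_cancel _ two_pos]

theorem mul_mul_add_one_eq_zero_of_choose_three {R : Type*} [CommRing R] (n : ℕ)
    (h : ((2 * n + 1).choose 3 : R) = n * (2 * n + 1).choose 2) :
    ((2 * n + 1 : ℕ) : R) * n * (n + 1) = 0 := by
  rcases n with _ | n
  · simp
  have pascal := Nat.choose_succ_right_eq (2 * (n + 1) + 1) 2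
  rw [show 2 * (n + 1) + 1 - 2 = 2 * n + 1 by omega] at pascal
  have := congrArg (Nat.cast : ℕ → R) pascal
  rw [choose_two_two_mul_add_one] at this h
  push_cast at this h ⊢
  linear_combination this - 3 * h

theorem pow_prime_pow_sub_one_eq_one {p : ℕ} [Fact p.Prime] {x : ZMod p} (hx : x ≠ 0) (i : ℕ) :
    x ^ (p ^ i - 1) = 1 := by
  refine mul_right_cancel₀ hx ?_
  rw [← pow_succ, Nat.sub_add_cancel (Nat.one_le_pow _ _ (Fact.out : p.Prime).pos),
    ZMod.pow_card_pow, one_mul]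

theorem two_mul_add_one_mod_prime_pow {p n k : ℕ} [Fact p.Prime] (hk : 0 < k)
    (hdigit : ∀ i < k,
      (((2 * n + 1) / p ^ i : ℕ) : ZMod p) = (n : ZMod p) ^ (p ^ i - 1) * (2 * n + 1 : ℕ))
    (hcases : ((2 * n + 1 : ℕ) : ZMod p) * n * (n + 1) = 0) :
    (2 * n + 1) % p ^ k = 0 ∨ (2 * n + 1) % p ^ k = 1 ∨ (2 * n + 1) % p ^ k = p ^ k - 1 := by
  have hp : p.Prime := Fact.out
  have digit : ∀ i ∈ range k,
      (2 * n + 1) / p ^ i % p = ((n : ZMod p) ^ (p ^ i - 1) * (2 * n + 1 : ℕ)).val :=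
    fun i hi => by rw [← hdigit i (mem_range.1 hi), ZMod.val_natCast]
  rw [mod_pow_eq_sum_digit]
  rcases mul_eq_zero.1 hcases with hN | hn1
  · rcases mul_eq_zero.1 hN with hN | hn
    · left
      refine sum_eq_zero fun i hi => ?_
      rw [digit i hi, hN]
      simp
    · right; left
      rw [sum_eq_single_of_mem 0 (mem_range.2 hk)]
      · have : Fact (1 < p) := ⟨hp.one_lt⟩
        rw [digit 0 (mem_range.2 hk)]
        push_cast
        simp [hn, ZMod.val_one]
      · intro i hi hi0
        rw [digit i hi, hn, zero_pow (by have := Nat.one_lt_pow hi0 hp.one_lt; omega)]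
        simp
  · right; right
    have hn : (n : ZMod p) = -1 := eq_neg_of_add_eq_zero_left hn1
    have hn0 : (n : ZMod p) ≠ 0 := by rw [hn]; exact neg_ne_zero.2 one_ne_zero
    have hN : ((2 * n + 1 : ℕ) : ZMod p) = -1 := by push_cast; rw [hn]; ring
    calc ∑ i ∈ range k, p ^ i * ((2 * n + 1) / p ^ i % p)
        = ∑ i ∈ range k, (p ^ (i + 1) - p ^ i) := by
          refine sum_congr rfl fun i hi => ?_
          rw [digit i hi, pow_prime_pow_sub_one_eq_one hn0, one_mul, hN,
            ZMod.val_neg_of_ne_zero, ZMod.val_one, Nat.mul_sub_one, pow_succ]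
      _ = p ^ k - 1 := by rw [sum_range_tsub (pow_right_mono₀ hp.one_le), pow_zero]

theorem two_mul_add_one_eq_of_mod {q n : ℕ} (hn : 0 < n) (hnq : n ≤ q)
    (heven : Even q → q < 2 * n)
    (h : (2 * n + 1) % q = 0 ∨ (2 * n + 1) % q = 1 ∨ (2 * n + 1) % q = q - 1) :
    2 * n + 1 = q ∨ 2 * n + 1 = 2 * q - 1 ∨ 2 * n + 1 = 2 * q + 1 := by
  have hq : 0 < q := by omega
  have hdiv : (2 * n + 1) / q < 4 := (Nat.div_lt_iff_lt_mul hq).2 (by omega)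
  have := Nat.div_add_mod (2 * n + 1) q
  have := Nat.mod_lt (2 * n + 1) hq
  rw [Nat.even_iff] at heven
  interval_cases (2 * n + 1) / q
  all_goals omega

theorem pow_clog_lt_two_mul_of_even {p n : ℕ} (hp : p.Prime) (hn : 1 < n)
    (heven : Even (p ^ clog p n)) :
    p ^ clog p n < 2 * n := by
  obtain ⟨hp2, hk⟩ := Nat.even_pow.1 heven
  rw [hp.even_iff] at hp2
  subst hp2
  have := Nat.pow_pred_clog_lt_self one_lt_two hn
  rw [← Nat.succ_pred_eq_of_ne_zero hk, pow_succ]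
  omega

theorem first_chain_lemma_general (p : ℕ) (hp : p.Prime) (n : ℕ)
    (h : ∀ j : ℕ, 0 < j → j < n - 1 →
      (((2 * n + 1).choose (j + 1) : ZMod p) = n * ((2 * n + 1).choose j : ZMod p))) :
    2 * n + 1 = 3 ∨ 2 * n + 1 = 5 ∨ 2 * n + 1 = 7 ∨
      ∃ m : ℕ, 2 * n + 1 = p ^ m ∨ 2 * n + 1 = 2 * p ^ m - 1 ∨ 2 * n + 1 = 2 * p ^ m + 1 := by
  have : Fact p.Prime := ⟨hp⟩
  rcases lt_or_ge n 4 with hn | hn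
  · interval_cases n
    · exact .inr <| .inr <| .inr ⟨0, .inl rfl⟩
    all_goals simp
  have chain : ∀ j, 0 < j → j ≤ n - 1 →
      ((2 * n + 1).choose j : ZMod p) = (n : ZMod p) ^ (j - 1) * (2 * n + 1 : ℕ) :=
    fun j hj hjn => by
      simpa using eq_pow_mul_of_succ_eq_mul (f := fun j => ((2 * n + 1).choose j : ZMod p)) h hj hjn
  have digit : ∀ i < clog p n,
      (((2 * n + 1) / p ^ i : ℕ) : ZMod p) = (n : ZMod p) ^ (p ^ i - 1) * (2 * n + 1 : ℕ) :=
    fun i hi => (natCast_choose_prime_pow _ i).symm.trans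
      (chain _ (pow_pos hp.pos i) (by have := pow_lt_of_lt_clog hi; omega))
  have residue := two_mul_add_one_mod_prime_pow (clog_pos hp.one_lt (by omega)) digit
    (mul_mul_add_one_eq_zero_of_choose_three n (h 2 (by omega) (by omega)))
  exact .inr <| .inr <| .inr ⟨clog p n, two_mul_add_one_eq_of_mod (by omega)
    (le_pow_clog hp.one_lt n) (pow_clog_lt_two_mul_of_even hp (by omega)) residue⟩

/-- Lemma 2.1: if the odd integer `2n+1 > 1` satisfies
`C(2n+1, j+1) ≡ n·C(2n+1, j) (mod p)` for `0 < j < n−1`, then `2n+1` equals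
`3`, `5`, `7`, `q`, `2q−1`, or `2q+1`, for some power `q` of `p`. -/
theorem first_chain_lemma (p : ℕ) (hp : p.Prime) (n : ℕ) (hn : 1 ≤ n)
    (h : ∀ j : ℕ, 0 < j → j < n - 1 →
      (((2 * n + 1).choose (j + 1) : ZMod p) = n * ((2 * n + 1).choose j : ZMod p))) :
    2 * n + 1 = 3 ∨ 2 * n + 1 = 5 ∨ 2 * n + 1 = 7 ∨
      ∃ m : ℕ, 2 * n + 1 = p ^ m ∨ 2 * n + 1 = 2 * p ^ m - 1 ∨ 2 * n + 1 = 2 * p ^ m + 1 :=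
  first_chain_lemma_general p hp n h
end

section
/- Let p be a prime and let q = p^m be a power of p. Then for all integers a, b with 0 ≤ b ≤ a < q, one has (−1)^a · C(a, b) ≡ (−1)^b · C(q−1−b, q−1−a) (mod p). -/
/-! Since `q = p^m` divides every `C(q, k)` with `0 < k < q`, Pascal's rule gives
`C(q-1, k) ≡ -C(q-1, k-1)`, hence `C(q-1, k) ≡ (-1)^k` for `k < q`. The theorem is then the
reduction mod `p` of the subset-of-a-subset identity
`C(q-1, a) C(a, b) = C(q-1, b) C(q-1-b, q-1-a)`. -/

namespace Nat

theorem choose_mul_choose_eq_choose_mul_choose_sub {n a b : ℕ} (hba : b ≤ a) (han : a ≤ n) :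
    n.choose a * a.choose b = n.choose b * (n - b).choose (n - a) := by
  rw [choose_mul hba, ← choose_symm (Nat.sub_le_sub_right han b),
    Nat.sub_sub_sub_cancel_right hba]

theorem cast_choose_eq_neg_one_pow {R : Type*} [Ring R] {n : ℕ}
    (h : ∀ k, 0 < k → k ≤ n → ((n + 1).choose k : R) = 0) :
    ∀ k ≤ n, (n.choose k : R) = (-1) ^ k
  | 0, _ => by simp
  | k + 1, hk => by
    have pascal : ((n + 1).choose (k + 1) : R) = n.choose k + n.choose (k + 1) := by
      rw [choose_succ_succ', cast_add]
    rw [h (k + 1) k.succ_pos hk, cast_choose_eq_neg_one_pow h k (by omega)] at pascal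
    rw [pow_succ, mul_neg_one]
    exact (neg_eq_of_add_eq_zero_right pascal.symm).symm

theorem cast_choose_prime_pow_sub_one (R : Type*) [Ring R] {p : ℕ} [CharP R p] (hp : p.Prime)
    {m k : ℕ} (hk : k < p ^ m) : ((p ^ m - 1).choose k : R) = (-1) ^ k := by
  have hq : p ^ m - 1 + 1 = p ^ m := Nat.sub_add_cancel (Nat.one_le_pow _ _ hp.pos)
  refine cast_choose_eq_neg_one_pow (fun j hj hjq => ?_) k (by omega)
  rw [hq, CharP.cast_eq_zero_iff R p]
  exact hp.dvd_choose_pow hj.ne' (by omega)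

end Nat

/-- For `q = p^m` a power of the prime `p` and `0 ≤ b ≤ a < q`,
`(−1)^a · C(a,b) ≡ (−1)^b · C(q−1−b, q−1−a) (mod p)`. -/
theorem signed_binomial_symmetry (p : ℕ) (hp : p.Prime) (m a b : ℕ)
    (hba : b ≤ a) (haq : a < p ^ m) :
    ((-1 : ZMod p) ^ a * (a.choose b : ZMod p) =
      (-1 : ZMod p) ^ b * ((p ^ m - 1 - b).choose (p ^ m - 1 - a) : ZMod p)) := by
  have identity := congrArg (Nat.cast : ℕ → ZMod p)
    (Nat.choose_mul_choose_eq_choose_mul_choose_sub hba (Nat.le_sub_one_of_lt haq))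
  rwa [Nat.cast_mul, Nat.cast_mul, Nat.cast_choose_prime_pow_sub_one _ hp haq,
    Nat.cast_choose_prime_pow_sub_one _ hp (hba.trans_lt haq)] at identity
end

section
/- Let L be a graded Lie algebra of maximal class over a field F, fix a nonzero y ∈ L_1 with ⁅u, y⁆ = 0 for all u ∈ L_2, and x ∈ L_1 not a scalar multiple of y. If ℓ is a positive integer such that [y x^i y] = 0 for 0 ≤ i < ℓ−1 and [y x^{ℓ−1} y] ≠ 0 (the first constituent length of L), then ℓ is even. -/
/-- Left-normed bracket of `a` with `n` copies of `b`:
`lnb a b n = [a b … b]` with `n` occurrences of `b`. -/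
def lnb {L : Type*} [LieRing L] (a b : L) : ℕ → L
  | 0 => a
  | n + 1 => ⁅lnb a b n, b⁆

/-- `Lc` is a grading of `L` (indexed by `ℕ`, with trivial component in degree `0`)
making `L` an (infinite-dimensional) graded Lie algebra of maximal class. -/
structure IsMaxClassGrading (F : Type*) [Field F] (L : Type*) [LieRing L] [LieAlgebra F L]
    (Lc : ℕ → Submodule F L) : Prop where
  zero : Lc 0 = ⊥
  internal : DirectSum.IsInternal Lc
  bracket_mem : ∀ i j : ℕ, ∀ u ∈ Lc i, ∀ w ∈ Lc j, ⁅u, w⁆ ∈ Lc (i + j)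
  dim_one : Module.finrank F (Lc 1) = 2
  dim_rest : ∀ i : ℕ, 2 ≤ i → Module.finrank F (Lc i) = 1
  gen : ∀ i : ℕ, 1 ≤ i →
    Lc (i + 1) = Submodule.span F {z | ∃ u ∈ Lc i, ∃ w ∈ Lc 1, z = ⁅u, w⁆}

lemma lnb_bracket_left {L : Type*} [LieRing L] (a b : L) (k : ℕ) :
    lnb ⁅a, b⁆ b k = lnb a b (k + 1) := by
  induction k with
  | zero => rfl
  | succ k ih => show ⁅lnb ⁅a, b⁆ b k, b⁆ = _; rw [ih]; rfl

lemma lnb_add {L : Type*} [LieRing L] (a b : L) (m k : ℕ) :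
    lnb (lnb a b m) b k = lnb a b (m + k) := by
  induction k with
  | zero => rfl
  | succ k ih => show ⁅lnb (lnb a b m) b k, b⁆ = _; rw [ih]; rfl

lemma lnb_key {L : Type*} [LieRing L] (x y : L) :
    ∀ n (v : L), (∀ k < n, ⁅lnb v x k, y⁆ = 0) →
      ⁅v, lnb y x n⁆ = ((-1 : ℤ) ^ n) • ⁅lnb v x n, y⁆ := by
  intro n
  induction n with
  | zero => intro v _; simp [lnb]
  | succ n ih =>
    intro v hv
    have e1 : ⁅v, lnb y x (n + 1)⁆
        = ⁅⁅v, lnb y x n⁆, x⁆ + ⁅lnb y x n, ⁅v, x⁆⁆ := by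
      show ⁅v, ⁅lnb y x n, x⁆⁆ = _
      rw [leibniz_lie]
    have t1 : ⁅v, lnb y x n⁆ = 0 := by
      rw [ih v (fun k hk => hv k (Nat.lt_succ_of_lt hk)), hv n (Nat.lt_succ_self n),
        smul_zero]
    have t2 : ⁅⁅v, x⁆, lnb y x n⁆ = ((-1 : ℤ) ^ n) • ⁅lnb v x (n + 1), y⁆ := by
      have := ih ⁅v, x⁆ (fun k hk => by
        rw [lnb_bracket_left]; exact hv (k + 1) (Nat.succ_lt_succ hk))
      rw [this, lnb_bracket_left]
    rw [e1, t1, zero_lie, zero_add, ← lie_skew, t2, pow_succ, mul_smul, neg_smul, one_smul, smul_neg]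

/-- The first constituent length of a graded Lie algebra of maximal class is even. -/
theorem first_constituent_even {F : Type*} [Field F] {L : Type*} [LieRing L] [LieAlgebra F L]
    (Lc : ℕ → Submodule F L) (hL : IsMaxClassGrading F L Lc)
    (x y : L) (hy : y ∈ Lc 1) (hy0 : y ≠ 0) (hyc : ∀ u ∈ Lc 2, ⁅u, y⁆ = 0)
    (hx : x ∈ Lc 1) (hxy : ∀ c : F, x ≠ c • y)
    (ℓ : ℕ) (hℓ : 0 < ℓ)
    (h1 : ∀ i : ℕ, i < ℓ - 1 → ⁅lnb y x i, y⁆ = 0)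
    (h2 : ⁅lnb y x (ℓ - 1), y⁆ ≠ 0) :
    Even ℓ := by
  rcases Nat.even_or_odd ℓ with he | ho
  · exact he
  exfalso
  obtain ⟨i, hi⟩ := ho
  have hv : ∀ k < i, ⁅lnb (lnb y x i) x k, y⁆ = 0 := by
    intro k hk
    rw [lnb_add]
    exact h1 (i + k) (by omega)
  have key := lnb_key x y i (lnb y x i) hv
  rw [lie_self, lnb_add] at key
  have hii : i + i = ℓ - 1 := by omega
  rw [hii] at key
  rcases Nat.even_or_odd i with hp | hp
  · rw [hp.neg_one_pow, one_smul] at key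
    exact h2 key.symm
  · rw [hp.neg_one_pow, neg_smul, one_smul] at key
    exact h2 (neg_eq_zero.mp key.symm)
end

section
/- Let L be a non-metabelian graded Lie algebra of maximal class over a field F, with setup elements x, y and first constituent length ℓ, and with constituent lengths ℓ = ℓ_1, ℓ_2, ℓ_3, … and elements v_1, v_2, … as in the recursive definition. Then every constituent length satisfies ℓ_r ≤ ℓ, and moreover ℓ_2 < ℓ. -/
/-- The standard setup for a non-metabelian graded Lie algebra of maximal class:
`y ∈ L_1` is nonzero and centralizes `L_2`, `x ∈ L_1` is not a scalar multiple of `y`,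
the first constituent length `ℓ` is positive with `[y x^i y] = 0` for `0 ≤ i < ℓ−1` and
`[y x^{ℓ−1} y] ≠ 0`, and `x` is normalized so that `[y x^ℓ] = 0`. -/
structure MaxClassSetup {F : Type*} [Field F] {L : Type*} [LieRing L] [LieAlgebra F L]
    (Lc : ℕ → Submodule F L) (x y : L) (ℓ : ℕ) : Prop where
  y_mem : y ∈ Lc 1
  y_ne : y ≠ 0
  y_central : ∀ u ∈ Lc 2, ⁅u, y⁆ = 0
  x_mem : x ∈ Lc 1
  x_not_mul : ∀ c : F, x ≠ c • y
  ell_pos : 0 < ℓ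
  first_const : ∀ i : ℕ, i < ℓ - 1 → ⁅lnb y x i, y⁆ = 0
  first_const_ne : ⁅lnb y x (ℓ - 1), y⁆ ≠ 0
  normalized : lnb y x ℓ = 0

/-- The sequences `(ℓ_r)_{r≥1}` of constituent lengths and `(v_r)_{r≥1}` of
distinguished homogeneous elements: `ℓ_1 = ℓ`, `v_1 = [y x^{ℓ−1}]`, and for `r ≥ 2`,
`ℓ_r > 0`, `[v_{r−1} y x^i y] = 0` for `0 ≤ i < ℓ_r − 1`,
`v_r = [v_{r−1} y x^{ℓ_r − 1}]`, and `[v_r y] ≠ 0`. -/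
structure ConstituentSeq {L : Type*} [LieRing L]
    (x y : L) (ℓ : ℕ) (l : ℕ → ℕ) (v : ℕ → L) : Prop where
  l_one : l 1 = ℓ
  v_one : v 1 = lnb y x (ℓ - 1)
  l_pos : ∀ r : ℕ, 2 ≤ r → 0 < l r
  const : ∀ r : ℕ, 2 ≤ r → ∀ i : ℕ, i < l r - 1 → ⁅lnb ⁅v (r - 1), y⁆ x i, y⁆ = 0
  v_def : ∀ r : ℕ, 2 ≤ r → v r = lnb ⁅v (r - 1), y⁆ x (l r - 1)
  const_end : ∀ r : ℕ, 2 ≤ r → ⁅v r, y⁆ ≠ 0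



@[simp] lemma lnb_zero_right {L : Type*} [LieRing L] (a b : L) : lnb a b 0 = a := rfl

lemma lnb_succ {L : Type*} [LieRing L] (a b : L) (n : ℕ) :
    lnb a b (n + 1) = ⁅lnb a b n, b⁆ := rfl

@[simp] lemma lnb_zero {L : Type*} [LieRing L] (b : L) : ∀ n, lnb (0 : L) b n = 0
  | 0 => rfl
  | n + 1 => by rw [lnb_succ, lnb_zero b n, zero_lie]

lemma lnb_lnb {L : Type*} [LieRing L] (a b : L) (m : ℕ) :
    ∀ n, lnb (lnb a b m) b n = lnb a b (m + n)
  | 0 => rfl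
  | n + 1 => by rw [lnb_succ, lnb_lnb a b m n, ← lnb_succ]; rfl

lemma lnb_eq_zero_of_le {L : Type*} [LieRing L] {a b : L} {k : ℕ}
    (h : lnb a b k = 0) {m : ℕ} (hm : k ≤ m) : lnb a b m = 0 := by
  have h2 : lnb a b (k + (m - k)) = 0 := by rw [← lnb_lnb, h, lnb_zero]
  rwa [Nat.add_sub_cancel' hm] at h2

open Finset in
lemma bracket_lnb {L : Type*} [LieRing L] (a b : L) (n : ℕ) : ∀ z : L,
    ⁅z, lnb a b n⁆ =
      ∑ j ∈ Finset.range (n + 1),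
        ((-1 : ℤ) ^ j * (n.choose j : ℤ)) • lnb ⁅lnb z b j, a⁆ b (n - j) := by
  induction n with
  | zero => intro z; simp
  | succ n ih =>
    intro z
    have hstep : ⁅z, lnb a b (n + 1)⁆
        = ⁅⁅z, lnb a b n⁆, b⁆ - ⁅⁅z, b⁆, lnb a b n⁆ := by
      rw [lnb_succ, leibniz_lie, ← lie_skew ⁅z, b⁆ (lnb a b n)]
      abel
    set F : ℕ → L := fun j => lnb ⁅lnb z b j, a⁆ b (n + 1 - j) with hF
    have h1 : ⁅⁅z, lnb a b n⁆, b⁆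
        = ∑ j ∈ range (n + 1), ((-1 : ℤ) ^ j * (n.choose j : ℤ)) • F j := by
      rw [ih z]
      have hsum : ⁅(∑ j ∈ range (n + 1),
            ((-1 : ℤ) ^ j * (n.choose j : ℤ)) • lnb ⁅lnb z b j, a⁆ b (n - j) : L), b⁆
          = ∑ j ∈ range (n + 1),
            ⁅((-1 : ℤ) ^ j * (n.choose j : ℤ)) • lnb ⁅lnb z b j, a⁆ b (n - j), b⁆ :=
        map_sum (AddMonoidHom.mk' (fun u : L => ⁅u, b⁆) (fun _ _ => add_lie _ _ _)) _ _
      rw [hsum]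
      refine Finset.sum_congr rfl fun j hj => ?_
      have hj' : j ≤ n := Nat.lt_succ_iff.mp (mem_range.mp hj)
      show ⁅_ • lnb ⁅lnb z b j, a⁆ b (n - j), b⁆ = _
      rw [smul_lie, ← lnb_succ]
      rw [hF]
      congr 2
      omega
    have hzb : ∀ j, lnb ⁅z, b⁆ b j = lnb z b (j + 1) := by
      intro j
      have := lnb_lnb z b 1 j
      rw [show lnb z b 1 = ⁅z, b⁆ from rfl] at this
      rw [this, Nat.add_comm]
    have h2 : ⁅⁅z, b⁆, lnb a b n⁆
        = ∑ j ∈ range (n + 1), ((-1 : ℤ) ^ j * (n.choose j : ℤ)) • F (j + 1) := by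
      rw [ih ⁅z, b⁆]
      refine Finset.sum_congr rfl fun j hj => ?_
      rw [hzb j, hF]
      congr 2
      omega
    rw [hstep, h1, h2]
    have h4 : ∑ j ∈ range (n + 2), ((-1 : ℤ) ^ j * (n.choose j : ℤ)) • F j
        = ∑ j ∈ range (n + 1), ((-1 : ℤ) ^ j * (n.choose j : ℤ)) • F j := by
      rw [Finset.sum_range_succ]
      simp
    have h3 : ∑ j ∈ range (n + 2),
          (if j = 0 then (0 : ℤ) else (-1 : ℤ) ^ (j - 1) * (n.choose (j - 1) : ℤ)) • F j
        = ∑ j ∈ range (n + 1), ((-1 : ℤ) ^ j * (n.choose j : ℤ)) • F (j + 1) := by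
      rw [Finset.sum_range_succ']
      simp
    rw [← h4, ← h3, ← Finset.sum_sub_distrib]
    refine Finset.sum_congr rfl fun j hj => ?_
    rw [← sub_smul]
    congr 1
    cases j with
    | zero => simp
    | succ k =>
      simp only [if_neg (Nat.succ_ne_zero k), Nat.add_sub_cancel, Nat.choose_succ_succ n k]
      push_cast
      ring

/-- Every constituent length of a non-metabelian graded Lie algebra of maximal class
satisfies `ℓ_r ≤ ℓ`, and moreover `ℓ_2 < ℓ`. -/
theorem constituent_le_first {F : Type*} [Field F] {L : Type*} [LieRing L] [LieAlgebra F L]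
    (Lc : ℕ → Submodule F L) (hL : IsMaxClassGrading F L Lc)
    (x y : L) (ℓ : ℕ) (hsetup : MaxClassSetup Lc x y ℓ)
    (l : ℕ → ℕ) (v : ℕ → L) (hseq : ConstituentSeq x y ℓ l v) :
    (∀ r : ℕ, 1 ≤ r → l r ≤ ℓ) ∧ l 2 < ℓ := by
  have hℓ1 : 1 ≤ ℓ := hsetup.ell_pos
  have part1 : ∀ r : ℕ, 2 ≤ r → l r ≤ ℓ := by
    intro r hr
    by_contra hlt
    push_neg at hlt
    have key : ∀ m : ℕ, ⁅lnb ⁅v (r - 1), y⁆ x m, y⁆ = 0 := by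
      intro m
      induction m using Nat.strong_induction_on with
      | _ m ih =>
        by_cases hm : m < l r - 1
        · exact hseq.const r hr m hm
        · have hmℓ : ℓ ≤ m := by omega
          have h0 : ⁅lnb ⁅v (r - 1), y⁆ x (m - ℓ), lnb y x ℓ⁆ = 0 := by
            rw [hsetup.normalized, lie_zero]
          rw [bracket_lnb, Finset.sum_range_succ] at h0
          have hz : ∑ j ∈ Finset.range ℓ, ((-1 : ℤ) ^ j * (ℓ.choose j : ℤ)) •
              lnb ⁅lnb (lnb ⁅v (r - 1), y⁆ x (m - ℓ)) x j, y⁆ x (ℓ - j) = 0 := by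
            refine Finset.sum_eq_zero fun j hj => ?_
            have hjℓ : j < ℓ := Finset.mem_range.mp hj
            rw [lnb_lnb, ih (m - ℓ + j) (by omega), lnb_zero, smul_zero]
          rw [hz, zero_add, lnb_lnb, Nat.sub_add_cancel hmℓ, Nat.choose_self,
            Nat.sub_self] at h0
          have h0' : ((-1 : ℤ) ^ ℓ) • ⁅lnb ⁅v (r - 1), y⁆ x m, y⁆ = 0 := by
            simpa using h0
          rcases Nat.even_or_odd ℓ with he | ho
          · simpa [he.neg_one_pow] using h0'
          · rw [ho.neg_one_pow, neg_smul, one_smul, neg_eq_zero] at h0'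
            exact h0'
    have hend := hseq.const_end r hr
    rw [hseq.v_def r hr] at hend
    exact hend (key (l r - 1))
  have part2 : l 2 < ℓ := by
    have hkey2 : lnb ⁅v 1, y⁆ x (ℓ - 1) = 0 := by
      have h0 : ⁅v 1, lnb y x (ℓ - 1)⁆ = 0 := by rw [← hseq.v_one]; exact lie_self _
      rw [bracket_lnb, Finset.sum_range_succ'] at h0
      have hz : ∑ i ∈ Finset.range (ℓ - 1), ((-1 : ℤ) ^ (i + 1) * ((ℓ - 1).choose (i + 1) : ℤ)) •
          lnb ⁅lnb (v 1) x (i + 1), y⁆ x (ℓ - 1 - (i + 1)) = 0 := by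
        refine Finset.sum_eq_zero fun i hi => ?_
        have hv1 : lnb (v 1) x (i + 1) = 0 := by
          rw [hseq.v_one, lnb_lnb]
          exact lnb_eq_zero_of_le hsetup.normalized (by omega)
        rw [hv1, zero_lie, lnb_zero, smul_zero]
      rw [hz, zero_add] at h0
      simpa using h0
    by_contra hge
    push_neg at hge
    have hv2 : v 2 = 0 := by
      rw [hseq.v_def 2 le_rfl, show (2 : ℕ) - 1 = 1 from rfl,
        show l 2 - 1 = (ℓ - 1) + (l 2 - ℓ) by omega, ← lnb_lnb, hkey2, lnb_zero]
    exact absurd (hv2 ▸ hseq.const_end 2 le_rfl) (by simp)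
  refine ⟨fun r hr => ?_, part2⟩
  rcases Nat.lt_or_ge r 2 with h2 | h2
  · have : r = 1 := by omega
    rw [this, hseq.l_one]
  · exact part1 r h2
end

section
/- Let L be a non-metabelian graded Lie algebra of maximal class over a field F, with setup elements x, y, first constituent length ℓ, constituent lengths ℓ = ℓ_1, ℓ_2, ℓ_3, … and elements v_1, v_2, … as in the recursive definition. Then [v_r y y] = 0 for every r ≥ 1; consequently every constituent length satisfies ℓ_r ≥ 2. -/
lemma aux_vyy {L : Type*} [LieRing L] {u x y : L} (hu : ⁅u, y⁆ = 0)
    (hxy : ⁅⁅x, y⁆, y⁆ = 0) : ⁅⁅⁅u, x⁆, y⁆, y⁆ = 0 := by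
  have h1 : ⁅⁅u, x⁆, y⁆ = ⁅u, ⁅x, y⁆⁆ := by
    rw [lie_lie, hu, lie_zero, sub_zero]
  simp [h1, lie_lie, hu, hxy]

/-- `[v_r y y] = 0` for every `r ≥ 1`; consequently every constituent length
satisfies `ℓ_r ≥ 2`. -/
theorem constituent_ge_two {F : Type*} [Field F] {L : Type*} [LieRing L] [LieAlgebra F L]
    (Lc : ℕ → Submodule F L) (hL : IsMaxClassGrading F L Lc)
    (x y : L) (ℓ : ℕ) (hsetup : MaxClassSetup Lc x y ℓ)
    (l : ℕ → ℕ) (v : ℕ → L) (hseq : ConstituentSeq x y ℓ l v) :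
    (∀ r : ℕ, 1 ≤ r → ⁅⁅v r, y⁆, y⁆ = 0) ∧ (∀ r : ℕ, 1 ≤ r → 2 ≤ l r) := by
  have hxyy : ⁅⁅x, y⁆, y⁆ = 0 :=
    hsetup.y_central _ (hL.bracket_mem 1 1 x hsetup.x_mem y hsetup.y_mem)
  have hl2 : 2 ≤ ℓ := by
    by_contra h
    have := hsetup.ell_pos
    have hℓ1 : ℓ = 1 := by omega
    apply hsetup.first_const_ne
    rw [hℓ1]
    show ⁅lnb y x 0, y⁆ = 0
    simp [lnb]
  have key : ∀ r : ℕ, ⁅⁅v (r + 1), y⁆, y⁆ = 0 ∧ 2 ≤ l (r + 1) := by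
    intro r
    induction r with
    | zero =>
      refine ⟨?_, by rw [hseq.l_one]; exact hl2⟩
      have hv : v 1 = ⁅lnb y x (ℓ - 2), x⁆ := by
        rw [hseq.v_one]
        have : ℓ - 1 = (ℓ - 2) + 1 := by omega
        rw [this]
        rfl
      rw [hv]
      exact aux_vyy (hsetup.first_const (ℓ - 2) (by omega)) hxyy
    | succ n ih =>
      have h2 : 2 ≤ n + 2 := by omega
      have hl : 2 ≤ l (n + 2) := by
        by_contra h
        have hl1 : l (n + 2) = 1 := by
          have := hseq.l_pos (n + 2) h2; omega
        apply hseq.const_end (n + 2) h2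
        have hv : v (n + 2) = ⁅v (n + 1), y⁆ := by
          rw [hseq.v_def (n + 2) h2, hl1]
          rfl
        rw [hv]
        exact ih.1
      refine ⟨?_, hl⟩
      have hv : v (n + 2) = ⁅lnb ⁅v (n + 1), y⁆ x (l (n + 2) - 2), x⁆ := by
        rw [hseq.v_def (n + 2) h2]
        have : l (n + 2) - 1 = (l (n + 2) - 2) + 1 := by omega
        rw [this]
        rfl
      rw [hv]
      exact aux_vyy (hseq.const (n + 2) h2 (l (n + 2) - 2) (by omega)) hxyy
  constructor
  · intro r hr
    obtain ⟨s, rfl⟩ : ∃ s, r = s + 1 := ⟨r - 1, by omega⟩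
    exact (key s).1
  · intro r hr
    obtain ⟨s, rfl⟩ : ∃ s, r = s + 1 := ⟨r - 1, by omega⟩
    exact (key s).2
end

section
/- Let L be a graded Lie algebra of maximal class over a field F, and let y ∈ L_1 be a nonzero element with ⁅u, y⁆ = 0 for all u ∈ L_2. Then ⁅⁅a, y⁆, y⁆ = 0 for every a ∈ L; that is, (ad y)² = 0, so y is a sandwich element of L. -/
/-!
Say `y` centralizes `L_n` if `⁅L_n, y⁆ = 0`. As `ad y` is a derivation and `y` centralizes
`L_2 ∋ ⁅w, y⁆`, if `y` centralizes `L_n` then `(ad y)² ⁅v, w⁆ = ⁅v, (ad y)² w⁆ = 0` for `v ∈ L_n`,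
`w ∈ L_1`, so `(ad y)²` kills `L_{n+1} = ⁅L_n, L_1⁆`. If `y` then fails to centralize `L_{n+1}`,
a nonzero `⁅u, y⁆` with `u ∈ L_{n+1}` spans the one-dimensional `L_{n+2}` and is killed by
`ad y`. Hence, inductively, `y` centralizes `L_n` or `L_{n+1}` for every `n ≥ 1`, and either
way `(ad y)²` vanishes on `L_n`.
-/

-- Mathlib's `ad R L y` is `⁅y, ·⁆`, the negative of the `ad y` above; the squares agree.
lemma LieAlgebra.ad_sq_apply (R : Type*) {L : Type*} [CommRing R] [LieRing L] [LieAlgebra R L]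
    (y a : L) : (LieAlgebra.ad R L y ^ 2) a = ⁅⁅a, y⁆, y⁆ := by
  rw [sq, Module.End.mul_apply, LieAlgebra.ad_apply, LieAlgebra.ad_apply, ← lie_skew a y,
    neg_lie, lie_skew]

lemma lie_lie_lie_eq_zero {L : Type*} [LieRing L] {v w y : L} (hv : ⁅v, y⁆ = 0)
    (hw : ⁅⁅w, y⁆, y⁆ = 0) : ⁅⁅⁅v, w⁆, y⁆, y⁆ = 0 := by
  rw [lie_lie v w y, hv, lie_zero, sub_zero, lie_lie, hw, hv, lie_zero, lie_zero, sub_zero]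

namespace IsMaxClassGrading

variable {F : Type*} [Field F] {L : Type*} [LieRing L] [LieAlgebra F L] {Lc : ℕ → Submodule F L}
  {y : L}

lemma succ_le_ker_ad_sq (hL : IsMaxClassGrading F L Lc) (hy : y ∈ Lc 1)
    (hyc : ∀ u ∈ Lc 2, ⁅u, y⁆ = 0) {n : ℕ} (hn : 1 ≤ n) (hcent : ∀ u ∈ Lc n, ⁅u, y⁆ = 0) :
    Lc (n + 1) ≤ LinearMap.ker (LieAlgebra.ad F L y ^ 2) := by
  rw [hL.gen n hn, Submodule.span_le]
  rintro _ ⟨v, hv, w, hw, rfl⟩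
  rw [SetLike.mem_coe, LinearMap.mem_ker, LieAlgebra.ad_sq_apply]
  exact lie_lie_lie_eq_zero (hcent v hv) (hyc _ (hL.bracket_mem 1 1 w hw y hy))

lemma centralizes_or_centralizes_succ_of_le_ker_ad_sq (hL : IsMaxClassGrading F L Lc)
    (hy : y ∈ Lc 1) {n : ℕ} (hn : 2 ≤ n) (hker : Lc n ≤ LinearMap.ker (LieAlgebra.ad F L y ^ 2)) :
    (∀ u ∈ Lc n, ⁅u, y⁆ = 0) ∨ ∀ u ∈ Lc (n + 1), ⁅u, y⁆ = 0 := by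
  refine or_iff_not_imp_left.mpr fun hne u' hu' => ?_
  push Not at hne
  obtain ⟨u, hu, huy⟩ := hne
  rw [eq_span_singleton_of_mem_of_finrank_eq_one (hL.dim_rest (n + 1) (by omega))
    (hL.bracket_mem n 1 u hu y hy) huy] at hu'
  obtain ⟨c, rfl⟩ := Submodule.mem_span_singleton.mp hu'
  rw [smul_lie, ← LieAlgebra.ad_sq_apply F, hker hu, smul_zero]

lemma centralizes_or_centralizes_succ (hL : IsMaxClassGrading F L Lc) (hy : y ∈ Lc 1)
    (hyc : ∀ u ∈ Lc 2, ⁅u, y⁆ = 0) {n : ℕ} (hn : 1 ≤ n) :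
    (∀ u ∈ Lc n, ⁅u, y⁆ = 0) ∨ ∀ u ∈ Lc (n + 1), ⁅u, y⁆ = 0 := by
  induction n, hn using Nat.le_induction with
  | base => exact Or.inr hyc
  | succ n hn ih =>
    rcases ih with hcent | hcent
    · exact hL.centralizes_or_centralizes_succ_of_le_ker_ad_sq hy (by omega)
        (hL.succ_le_ker_ad_sq hy hyc hn hcent)
    · exact Or.inl hcent

lemma le_ker_ad_sq (hL : IsMaxClassGrading F L Lc) (hy : y ∈ Lc 1)
    (hyc : ∀ u ∈ Lc 2, ⁅u, y⁆ = 0) (n : ℕ) :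
    Lc n ≤ LinearMap.ker (LieAlgebra.ad F L y ^ 2) := by
  rcases Nat.eq_zero_or_pos n with rfl | hn
  · rw [hL.zero]
    exact bot_le
  intro u hu
  rw [LinearMap.mem_ker, LieAlgebra.ad_sq_apply]
  rcases hL.centralizes_or_centralizes_succ hy hyc hn with hcent | hcent
  · rw [hcent u hu, zero_lie]
  · exact hcent _ (hL.bracket_mem n 1 u hu y hy)

end IsMaxClassGrading

theorem sandwich_general {F : Type*} [Field F] {L : Type*} [LieRing L] [LieAlgebra F L]
    (Lc : ℕ → Submodule F L) (hL : IsMaxClassGrading F L Lc)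
    (y : L) (hy : y ∈ Lc 1) (hyc : ∀ u ∈ Lc 2, ⁅u, y⁆ = 0) :
    ∀ a : L, ⁅⁅a, y⁆, y⁆ = 0 := by
  have hker : ⊤ ≤ LinearMap.ker (LieAlgebra.ad F L y ^ 2) := by
    rw [← hL.internal.submodule_iSup_eq_top]
    exact iSup_le (hL.le_ker_ad_sq hy hyc)
  intro a
  rw [← LieAlgebra.ad_sq_apply F]
  exact hker Submodule.mem_top

/-- If `y ∈ L_1` is nonzero and centralizes `L_2` in a graded Lie algebra of maximal
class, then `(ad y)² = 0`: `y` is a sandwich element. -/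
theorem sandwich {F : Type*} [Field F] {L : Type*} [LieRing L] [LieAlgebra F L]
    (Lc : ℕ → Submodule F L) (hL : IsMaxClassGrading F L Lc)
    (y : L) (hy : y ∈ Lc 1) (hy0 : y ≠ 0) (hyc : ∀ u ∈ Lc 2, ⁅u, y⁆ = 0) :
    ∀ a : L, ⁅⁅a, y⁆, y⁆ = 0 :=
  sandwich_general Lc hL y hy hyc
end

section
/- Let L be a thin Lie algebra over a field F with second diamond L_k and k > 3, with setup elements x, y satisfying [y x^i y] = 0 for 0 ≤ i < k−2. Then k is odd. -/
/-- `Lc` is a grading of `L` (indexed by `ℕ`, with trivial component in degree `0`)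
making `L` an (infinite-dimensional) thin Lie algebra: `L` is the internal direct sum
of the `Lc i`, `⁅Lc i, Lc j⁆ ⊆ Lc (i+j)`, `dim (Lc 1) = 2`, every `Lc i` (`i ≥ 1`) is
nonzero, and the covering property holds: for every `i ≥ 1` and nonzero `z ∈ Lc i`,
`span {⁅z, w⁆ : w ∈ Lc 1} = Lc (i+1)`. -/
structure IsThinGrading (F : Type*) [Field F] (L : Type*) [LieRing L] [LieAlgebra F L]
    (Lc : ℕ → Submodule F L) : Prop where
  zero : Lc 0 = ⊥
  internal : DirectSum.IsInternal Lc
  bracket_mem : ∀ i j : ℕ, ∀ u ∈ Lc i, ∀ w ∈ Lc j, ⁅u, w⁆ ∈ Lc (i + j)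
  dim_one : Module.finrank F (Lc 1) = 2
  nonzero : ∀ i : ℕ, 1 ≤ i → Lc i ≠ ⊥
  covering : ∀ i : ℕ, 1 ≤ i → ∀ z ∈ Lc i, z ≠ 0 →
    Submodule.span F {w | ∃ u ∈ Lc 1, w = ⁅z, u⁆} = Lc (i + 1)

/-- `k` is the degree of the second diamond: the smallest `k > 1` with
`dim (Lc k) = 2`. -/
def IsSecondDiamond {F : Type*} [Field F] {L : Type*} [LieRing L] [LieAlgebra F L]
    (Lc : ℕ → Submodule F L) (k : ℕ) : Prop :=
  IsLeast {i : ℕ | 1 < i ∧ Module.finrank F (Lc i) = 2} k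

/-- The quotient `L/L^k` is metabelian: `⁅Lc i, Lc j⁆ = 0` whenever `i, j ≥ 2` and
`i + j < k`. -/
def QuotientMetabelian {F : Type*} [Field F] {L : Type*} [LieRing L] [LieAlgebra F L]
    (Lc : ℕ → Submodule F L) (k : ℕ) : Prop :=
  ∀ i j : ℕ, 2 ≤ i → 2 ≤ j → i + j < k → ∀ u ∈ Lc i, ∀ w ∈ Lc j, ⁅u, w⁆ = 0

/-- The standard setup in a thin Lie algebra with second diamond `L_k`, `k > 3`:
`y ∈ L_1` is nonzero and centralizes `L_2`, `x, y` form a basis of `L_1` (equivalently,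
they are linearly independent elements of the two-dimensional space `L_1`), and
`[y x^i y] = 0` for `0 ≤ i < k − 2`. -/
structure ThinSetup {F : Type*} [Field F] {L : Type*} [LieRing L] [LieAlgebra F L]
    (Lc : ℕ → Submodule F L) (x y : L) (k : ℕ) : Prop where
  k_gt : 3 < k
  y_mem : y ∈ Lc 1
  x_mem : x ∈ Lc 1
  indep : LinearIndependent F ![x, y]
  y_central : ∀ u ∈ Lc 2, ⁅u, y⁆ = 0
  chain : ∀ i : ℕ, i < k - 2 → ⁅lnb y x i, y⁆ = 0

/-- The degree `k` of the second diamond of a thin Lie algebra is odd. -/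
theorem second_diamond_odd {F : Type*} [Field F] {L : Type*} [LieRing L] [LieAlgebra F L]
    (Lc : ℕ → Submodule F L) (hL : IsThinGrading F L Lc)
    (k : ℕ) (hk : IsSecondDiamond Lc k)
    (x y : L) (hsetup : ThinSetup Lc x y k) :
    Odd k := by
  obtain ⟨⟨hk1, hdimk⟩, -⟩ := hk
  have hk3 : 3 < k := hsetup.k_gt
  have hwsucc : ∀ n : ℕ, lnb y x (n+1) = ⁅lnb y x n, x⁆ := fun n => rfl
  have hchain : ∀ n : ℕ, n < k - 2 → ⁅lnb y x n, y⁆ = 0 := hsetup.chain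
  have hmem : ∀ n : ℕ, lnb y x n ∈ Lc (n+1) := by
    intro n
    induction n with
    | zero => exact hsetup.y_mem
    | succ n ih => exact hL.bracket_mem (n+1) 1 _ ih x hsetup.x_mem
  have hyne : y ≠ 0 := by
    have h := hsetup.indep.ne_zero 1
    simpa using h
  -- `Lc 1 = span {x, y}`
  have hfd : FiniteDimensional F (Lc 1) := FiniteDimensional.of_finrank_pos
    (by rw [hL.dim_one]; norm_num)
  have hle : Submodule.span F ({x, y} : Set L) ≤ Lc 1 := by
    rw [Submodule.span_le]
    rintro z hz
    rcases hz with rfl | hz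
    · exact hsetup.x_mem
    · rcases hz with rfl; exact hsetup.y_mem
  have hrange : Set.range ![x, y] = ({x, y} : Set L) := by
    simp [Matrix.range_cons, Matrix.range_empty, Set.pair_comm]
  have hfr : Module.finrank F (Submodule.span F ({x, y} : Set L)) = 2 := by
    rw [← hrange, finrank_span_eq_card hsetup.indep]; simp
  have hspan : Submodule.span F ({x, y} : Set L) = Lc 1 :=
    Submodule.eq_of_le_of_finrank_le hle (by rw [hL.dim_one, hfr])
  have hdecomp : ∀ u ∈ Lc 1, ∃ a b : F, a • x + b • y = u := by
    intro u hu
    rw [← hspan] at hu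
    exact Submodule.mem_span_pair.mp hu
  -- nonvanishing of the chain elements
  have hwne : ∀ n : ℕ, n ≤ k - 2 → lnb y x n ≠ 0 := by
    intro n
    induction n with
    | zero => intro _; exact hyne
    | succ n ih =>
      intro hn h0
      have hwn : lnb y x n ≠ 0 := ih (by omega)
      have hcov := hL.covering (n+1) (by omega) (lnb y x n) (hmem n) hwn
      have hbot : Lc (n+1+1) = ⊥ := by
        rw [← hcov]
        apply Submodule.span_eq_bot.mpr
        rintro s ⟨u, hu, rfl⟩
        obtain ⟨a, b, rfl⟩ := hdecomp u hu
        rw [lie_add, lie_smul, lie_smul, ← hwsucc n, h0, hchain n (by omega),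
          smul_zero, smul_zero, add_zero]
      exact hL.nonzero (n+2) (by omega) hbot
  -- the key nonvanishing: `⁅lnb y x (k-2), y⁆ ≠ 0`
  have hne : ⁅lnb y x (k-2), y⁆ ≠ 0 := by
    intro h0
    have hwk2mem : lnb y x (k-2) ∈ Lc (k-1) := by
      have h := hmem (k-2); rwa [show k-2+1 = k-1 by omega] at h
    have hwk2ne : lnb y x (k-2) ≠ 0 := hwne (k-2) le_rfl
    have hcov := hL.covering (k-1) (by omega) _ hwk2mem hwk2ne
    rw [show k-1+1 = k by omega] at hcov
    have hsub : Lc k ≤ Submodule.span F ({⁅lnb y x (k-2), x⁆} : Set L) := by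
      rw [← hcov, Submodule.span_le]
      rintro s ⟨u, hu, rfl⟩
      obtain ⟨a, b, rfl⟩ := hdecomp u hu
      rw [lie_add, lie_smul, lie_smul, h0, smul_zero, add_zero]
      exact Submodule.smul_mem _ a (Submodule.mem_span_singleton_self _)
    haveI := FiniteDimensional.span_of_finite F (Set.finite_singleton ⁅lnb y x (k-2), x⁆)
    have h2 : Module.finrank F (Lc k) ≤
        Module.finrank F (Submodule.span F ({⁅lnb y x (k-2), x⁆} : Set L)) :=
      Submodule.finrank_mono hsub
    have h3 : Module.finrank F (Submodule.span F ({⁅lnb y x (k-2), x⁆} : Set L)) ≤ 1 := by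
      by_cases hv : ⁅lnb y x (k-2), x⁆ = 0
      · rw [hv, Submodule.span_singleton_eq_bot.mpr rfl, finrank_bot]; omega
      · rw [finrank_span_singleton hv]
    omega
  -- metabelian identities
  have hM : ∀ b a : ℕ, 1 ≤ a → 1 ≤ b → a + b + 2 < k → ⁅lnb y x a, lnb y x b⁆ = 0 := by
    intro b
    induction b with
    | zero => intro a _ h1 _; omega
    | succ b ih =>
      intro a ha _ hlt
      rcases Nat.eq_zero_or_pos b with rfl | hb
      · -- `lnb y x 1 = ⁅y, x⁆`
        have h1 : ⁅lnb y x a, y⁆ = 0 := hchain a (by omega)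
        have h2 : ⁅lnb y x (a+1), y⁆ = 0 := hchain (a+1) (by omega)
        show ⁅lnb y x a, ⁅(y : L), x⁆⁆ = 0
        rw [leibniz_lie, h1, zero_lie, zero_add, ← hwsucc a, ← lie_skew, h2, neg_zero]
      · rw [hwsucc b, leibniz_lie, ih a ha hb (by omega), zero_lie, zero_add,
          ← hwsucc a, ← lie_skew, ih (a+1) (by omega) hb (by omega), neg_zero]
  -- sign-flip identity
  have hS : ∀ a b : ℕ, 1 ≤ a → 1 ≤ b → a + b + 2 < k →
      ⁅lnb y x a, lnb y x (b+1)⁆ = -⁅lnb y x (a+1), lnb y x b⁆ := by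
    intro a b ha hb hlt
    rw [hwsucc b, leibniz_lie, hM b a ha hb hlt, zero_lie, zero_add, ← hwsucc a, ← lie_skew]
  -- parity argument
  rcases Nat.even_or_odd k with hke | hko
  · exfalso
    obtain ⟨m, hm⟩ := hke
    obtain ⟨t, ht⟩ : ∃ t, k = 2*t + 4 := ⟨m - 2, by omega⟩
    have claim : ∀ d : ℕ, d ≤ t → ⁅lnb y x (t+1-d), lnb y x (t+1+d)⁆ = 0 := by
      intro d
      induction d with
      | zero => intro _; simp
      | succ d ih =>
        intro hd
        rw [show t+1-(d+1) = t-d by omega, show t+1+(d+1) = (t+1+d)+1 by omega,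
          hS (t-d) (t+1+d) (by omega) (by omega) (by omega),
          show t-d+1 = t+1-d by omega, ih (by omega), neg_zero]
    have hmid : ⁅lnb y x 1, lnb y x (2*t+1)⁆ = 0 := by
      have h := claim t le_rfl
      rwa [show t+1-t = 1 by omega, show t+1+t = 2*t+1 by omega] at h
    have hfin : ⁅lnb y x (k-2), y⁆ = 0 := by
      rw [show k-2 = (2*t+1)+1 by omega, hwsucc (2*t+1), lie_lie,
        hchain (2*t+1) (by omega), lie_zero, sub_zero, ← lie_skew x y,
        show ⁅(y : L), x⁆ = lnb y x 1 from rfl, lie_neg, ← lie_skew, neg_neg, hmid]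
    exact hne hfin
  · exact hko
end

section
/- Let L be a thin Lie algebra over a field F with second diamond L_k and k > 3, with setup elements x, y satisfying [y x^i y] = 0 for 0 ≤ i < k−2, and v := [y x^{k−2}]. Then [v y y] = 0, and the homogeneous component L_{k+1} is one-dimensional, spanned by [v y x]. -/
/-- With `v = [y x^{k−2}]`, one has `[v y y] = 0`, and `L_{k+1}` is one-dimensional,
spanned by `[v y x]`. -/
theorem vyy_eq_zero_and_next_component {F : Type*} [Field F] {L : Type*} [LieRing L]
    [LieAlgebra F L]
    (Lc : ℕ → Submodule F L) (hL : IsThinGrading F L Lc)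
    (k : ℕ) (hk : IsSecondDiamond Lc k)
    (x y : L) (hsetup : ThinSetup Lc x y k)
    (v : L) (hv : v = lnb y x (k - 2)) :
    ⁅⁅v, y⁆, y⁆ = 0 ∧ Lc (k + 1) = Submodule.span F {⁅⁅v, y⁆, x⁆} ∧
      Module.finrank F (Lc (k + 1)) = 1 := by
  obtain ⟨⟨hk1, hdimk⟩, -⟩ := hk
  have hkgt := hsetup.k_gt
  have hy0 : y ≠ 0 := by simpa using hsetup.indep.ne_zero 1
  have hfd : FiniteDimensional F (Lc 1) :=
    FiniteDimensional.of_finrank_pos (by rw [hL.dim_one]; norm_num)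
  have hrange : Set.range ![x, y] = {x, y} := by
    ext w; simp [Fin.exists_fin_two]; tauto
  have hspan1 : Submodule.span F {x, y} = Lc 1 := by
    have hle : Submodule.span F {x, y} ≤ Lc 1 := by
      rw [Submodule.span_le]
      rintro w (rfl | rfl)
      · exact hsetup.x_mem
      · exact hsetup.y_mem
    refine Submodule.eq_of_le_of_finrank_le hle ?_
    have h2 := finrank_span_eq_card hsetup.indep
    rw [hrange] at h2
    rw [hL.dim_one, h2]; simp
  have key : ∀ z : L, Submodule.span F {w | ∃ u ∈ Lc 1, w = ⁅z, u⁆}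
      = Submodule.span F {⁅z, x⁆, ⁅z, y⁆} := by
    intro z
    have hset : {w | ∃ u ∈ Lc 1, w = ⁅z, u⁆}
        = (LieAlgebra.ad F L z : L →ₗ[F] L) '' (Lc 1 : Set L) := by
      ext w
      simp only [Set.mem_image, Set.mem_setOf_eq, SetLike.mem_coe, LieHom.coe_toLinearMap,
        LieAlgebra.ad_apply]
      constructor
      · rintro ⟨u, hu, rfl⟩; exact ⟨u, hu, rfl⟩
      · rintro ⟨u, hu, rfl⟩; exact ⟨u, hu, rfl⟩
    rw [hset]
    calc Submodule.span F ((LieAlgebra.ad F L z : L →ₗ[F] L) '' (Lc 1 : Set L))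
        = Submodule.map (LieAlgebra.ad F L z : L →ₗ[F] L) (Lc 1) := by
          rw [Submodule.span_image, Submodule.span_eq]
      _ = Submodule.map (LieAlgebra.ad F L z : L →ₗ[F] L) (Submodule.span F {x, y}) := by
          rw [hspan1]
      _ = Submodule.span F ((LieAlgebra.ad F L z : L →ₗ[F] L) '' {x, y}) := by
          rw [Submodule.map_span]
      _ = Submodule.span F {⁅z, x⁆, ⁅z, y⁆} := by rw [Set.image_pair]; simp
  have hchain : ∀ i, i ≤ k - 2 → lnb y x i ∈ Lc (i + 1) ∧ lnb y x i ≠ 0 := by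
    intro i
    induction i with
    | zero => exact fun _ => ⟨hsetup.y_mem, hy0⟩
    | succ n ih =>
      intro hn
      obtain ⟨hmem, hne⟩ := ih (by omega)
      have hmem' : lnb y x (n + 1) ∈ Lc (n + 1 + 1) :=
        hL.bracket_mem (n + 1) 1 _ hmem x hsetup.x_mem
      refine ⟨hmem', fun h0 => ?_⟩
      have hcov := hL.covering (n + 1) (by omega) _ hmem hne
      rw [key, hsetup.chain n (by omega),
        show ⁅lnb y x n, x⁆ = lnb y x (n + 1) from rfl, h0] at hcov
      simp only [Submodule.span_insert_zero, Submodule.span_zero_singleton,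
        Set.insert_eq_self, Set.mem_singleton_iff] at hcov
      exact hL.nonzero (n + 1 + 1) (by omega) hcov.symm
  set u := lnb y x (k - 3) with hu
  have hvux : v = ⁅u, x⁆ := by
    rw [hv, show k - 2 = (k - 3) + 1 by omega]; rfl
  have huy : ⁅u, y⁆ = 0 := hsetup.chain (k - 3) (by omega)
  have hxyy : ⁅⁅x, y⁆, y⁆ = 0 :=
    hsetup.y_central _ (hL.bracket_mem 1 1 x hsetup.x_mem y hsetup.y_mem)
  have hvy : ⁅v, y⁆ = ⁅u, ⁅x, y⁆⁆ := by rw [hvux, lie_lie, huy]; simp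
  have hvyy : ⁅⁅v, y⁆, y⁆ = 0 := by rw [hvy, lie_lie, hxyy, huy]; simp
  have hvmem : v ∈ Lc (k - 1) := by
    have := (hchain (k - 2) le_rfl).1
    rwa [← hv, show k - 2 + 1 = k - 1 by omega] at this
  have hvne : v ≠ 0 := by rw [hv]; exact (hchain (k - 2) le_rfl).2
  have hcovv := hL.covering (k - 1) (by omega) v hvmem hvne
  rw [key, show k - 1 + 1 = k by omega] at hcovv
  have hvymem : ⁅v, y⁆ ∈ Lc k := by
    have := hL.bracket_mem (k - 1) 1 v hvmem y hsetup.y_mem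
    rwa [show k - 1 + 1 = k by omega] at this
  have hvyne : ⁅v, y⁆ ≠ 0 := by
    intro h0
    rw [h0] at hcovv
    have h1 : Module.finrank F (Lc k) ≤ 1 := by
      rw [← hcovv, Set.pair_comm, Submodule.span_insert_zero]
      simpa using finrank_span_le_card ({⁅v, x⁆} : Set L)
    omega
  have hcov2 := hL.covering k (by omega) _ hvymem hvyne
  rw [key, hvyy, Set.pair_comm, Submodule.span_insert_zero] at hcov2
  have hne : ⁅⁅v, y⁆, x⁆ ≠ 0 := by
    intro h0
    rw [h0, Submodule.span_zero_singleton] at hcov2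
    exact hL.nonzero (k + 1) (by omega) hcov2.symm
  exact ⟨hvyy, hcov2.symm, by rw [← hcov2]; exact finrank_span_singleton hne⟩
end

section
/- Let L be a thin Lie algebra over a field F with second diamond L_k and k > 3, with setup elements x, y satisfying [y x^i y] = 0 for 0 ≤ i < k−2, and v := [y x^{k−2}]. Then [v x y] = ((k−1)/2) · [v y x], where (k−1)/2 (an integer, since k is odd) is interpreted in F. -/
/-- With `v = [y x^{k−2}]`, one has `[v x y] = ((k−1)/2) · [v y x]`, the integer
`(k−1)/2` being interpreted in `F`. -/
theorem vxy_eq {F : Type*} [Field F] {L : Type*} [LieRing L] [LieAlgebra F L]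
    (Lc : ℕ → Submodule F L) (hL : IsThinGrading F L Lc)
    (k : ℕ) (hk : IsSecondDiamond Lc k)
    (x y : L) (hsetup : ThinSetup Lc x y k)
    (v : L) (hv : v = lnb y x (k - 2)) :
    ⁅⁅v, x⁆, y⁆ = ((((k - 1) / 2 : ℕ) : F)) • ⁅⁅v, y⁆, x⁆ := by
  obtain ⟨hkgt, hy1, hx1, hind, hyc, hchain⟩ := hsetup
  obtain ⟨K, rfl⟩ : ∃ K, k = K + 2 := ⟨k - 2, by omega⟩
  have hK : 2 ≤ K := by omega
  have hv' : v = lnb y x K := by simpa using hv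
  subst hv'
  have hchain' : ∀ i : ℕ, i < K → ⁅lnb y x i, y⁆ = 0 := fun i hi => hchain i (by omega)
  have hy0 : y ≠ 0 := by simpa using hind.ne_zero 1
  -- L₁ is spanned by x and y
  have hL1 : Lc 1 = Submodule.span F {x, y} := by
    have hle : Submodule.span F {x, y} ≤ Lc 1 := by
      rw [Submodule.span_le]
      rintro w hw
      simp only [Set.mem_insert_iff, Set.mem_singleton_iff] at hw
      rcases hw with rfl | rfl
      exacts [hx1, hy1]
    have hfin : FiniteDimensional F (Lc 1) :=
      FiniteDimensional.of_finrank_pos (by rw [hL.dim_one]; norm_num)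
    have hr : Module.finrank F (Submodule.span F ({x, y} : Set L)) = 2 := by
      have hrange : Set.range ![x, y] = {x, y} := by
        simp [Matrix.range_cons, Set.pair_comm]
      have h := finrank_span_eq_card hind
      rw [hrange] at h
      simpa using h
    exact (Submodule.eq_of_le_of_finrank_le hle (by rw [hr, hL.dim_one])).symm
  -- covering rephrased with the generators x, y
  have hspan2 : ∀ i : ℕ, 1 ≤ i → ∀ z ∈ Lc i, z ≠ 0 →
      Lc (i + 1) = Submodule.span F {⁅z, x⁆, ⁅z, y⁆} := by
    intro i hi z hz hz0
    rw [← hL.covering i hi z hz hz0]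
    apply le_antisymm
    · rw [Submodule.span_le]
      rintro w ⟨u, hu, rfl⟩
      rw [hL1] at hu
      obtain ⟨a, b, hab⟩ := Submodule.mem_span_pair.mp hu
      rw [← hab, lie_add, lie_smul, lie_smul]
      exact Submodule.add_mem _
        (Submodule.smul_mem _ _ (Submodule.subset_span (Set.mem_insert _ _)))
        (Submodule.smul_mem _ _ (Submodule.subset_span (Set.mem_insert_of_mem _ rfl)))
    · rw [Submodule.span_le]
      rintro w hw
      simp only [Set.mem_insert_iff, Set.mem_singleton_iff] at hw
      rcases hw with rfl | rfl
      · exact Submodule.subset_span ⟨x, hx1, rfl⟩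
      · exact Submodule.subset_span ⟨y, hy1, rfl⟩
  have humem : ∀ i : ℕ, lnb y x i ∈ Lc (i + 1) := by
    intro i
    induction i with
    | zero => exact hy1
    | succ i ih => exact hL.bracket_mem (i + 1) 1 _ ih x hx1
  -- Lc (i+1) is spanned by lnb y x i for 1 ≤ i ≤ K
  have hspanu : ∀ i : ℕ, 1 ≤ i → i ≤ K → Lc (i + 1) = F ∙ (lnb y x i) := by
    intro i
    induction i with
    | zero => intro h; exact absurd h (by norm_num)
    | succ i ih =>
      intro _ hiK
      rcases Nat.eq_zero_or_pos i with rfl | hipos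
      · have h2 := hspan2 1 le_rfl y hy1 hy0
        rw [lie_self, Submodule.span_insert, Submodule.span_zero_singleton, sup_bot_eq] at h2
        exact h2
      · have hu := ih hipos (by omega)
        have hune : lnb y x i ≠ 0 := by
          intro h0
          exact hL.nonzero (i + 1) (by omega)
            (by rw [hu, h0, Submodule.span_zero_singleton])
        have h2 := hspan2 (i + 1) (by omega) _ (humem i) hune
        rw [hchain' i (by omega), Submodule.span_insert, Submodule.span_zero_singleton,
          sup_bot_eq] at h2
        exact h2
  have hv0 : lnb y x K ≠ 0 := by
    intro h0
    exact hL.nonzero (K + 1) (by omega)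
      (by rw [hspanu K (by omega) le_rfl, h0, Submodule.span_zero_singleton])
  -- [v, y] ≠ 0, otherwise Lc k would be 1-dimensional
  have hvy0 : ⁅lnb y x K, y⁆ ≠ 0 := by
    intro h0
    have h2 := hspan2 (K + 1) (by omega) _ (humem K) hv0
    rw [h0, Submodule.span_insert, Submodule.span_zero_singleton, sup_bot_eq] at h2
    have hdim2 : Module.finrank F (Lc (K + 1 + 1)) = 2 := hk.1.2
    have hle1 : Module.finrank F (Lc (K + 1 + 1)) ≤ 1 := by
      rw [h2]
      rcases eq_or_ne (⁅lnb y x K, x⁆) 0 with h | h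
      · rw [h, Submodule.span_zero_singleton]; simp
      · rw [finrank_span_singleton h]
    omega
  -- Lemma A: [u_i, u_j] = 0 for i + j + 1 ≤ K
  have hA : ∀ j i : ℕ, i + j + 1 ≤ K → ⁅lnb y x i, lnb y x j⁆ = 0 := by
    intro j
    induction j with
    | zero => intro i hi; exact hchain' i (by omega)
    | succ j ih =>
      intro i hi
      have h1 : ⁅lnb y x i, lnb y x (j + 1)⁆
          = ⁅⁅lnb y x i, lnb y x j⁆, x⁆ + ⁅lnb y x j, ⁅lnb y x i, x⁆⁆ :=
        leibniz_lie _ _ _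
      rw [ih i (by omega), zero_lie, zero_add] at h1
      rw [h1, show ⁅lnb y x i, x⁆ = lnb y x (i + 1) from rfl, ← lie_skew,
        ih (i + 1) (by omega), neg_zero]
  -- Lemma B: [u_i, u_j] = (-1)^i • [y, u_K] for i + j = K
  have hB : ∀ i j : ℕ, i + j = K →
      ⁅lnb y x i, lnb y x j⁆ = ((-1 : F)) ^ i • ⁅y, lnb y x K⁆ := by
    intro i
    induction i with
    | zero =>
      intro j hj
      obtain rfl : j = K := by omega
      simp [lnb]
    | succ i ih =>
      intro j hj
      have h1 : ⁅lnb y x i, lnb y x (j + 1)⁆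
          = ⁅⁅lnb y x i, lnb y x j⁆, x⁆ + ⁅lnb y x j, lnb y x (i + 1)⁆ :=
        leibniz_lie _ _ _
      rw [hA j i (by omega), zero_lie, zero_add, ih (j + 1) (by omega)] at h1
      rw [← lie_skew, ← h1, pow_succ]
      module
  have hw0 : ⁅y, lnb y x K⁆ ≠ 0 := by
    intro h0
    exact hvy0 (by rw [← lie_skew, h0, neg_zero])
  -- K is odd
  have hKodd : Odd K := by
    rcases Nat.even_or_odd K with ⟨t, ht⟩ | h
    · exfalso
      have hbt := hB t t (by omega)
      rw [lie_self] at hbt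
      rcases smul_eq_zero.mp hbt.symm with h | h
      · exact absurd h (pow_ne_zero _ (by norm_num))
      · exact hw0 h
    · exact h
  -- Lemma C: [u_i, u_j] = (-1)^i • ([y, u_{K+1}] + i • [[v,y],x]) for i + j = K + 1
  have hC : ∀ i j : ℕ, i + j = K + 1 →
      ⁅lnb y x i, lnb y x j⁆
        = ((-1 : F)) ^ i •
            (⁅y, lnb y x (K + 1)⁆ + (i : F) • ⁅⁅lnb y x K, y⁆, x⁆) := by
    intro i
    induction i with
    | zero =>
      intro j hj
      obtain rfl : j = K + 1 := by omega
      simp [lnb]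
    | succ i ih =>
      intro j hj
      have h1 : ⁅lnb y x i, lnb y x (j + 1)⁆
          = ⁅⁅lnb y x i, lnb y x j⁆, x⁆ + ⁅lnb y x j, lnb y x (i + 1)⁆ :=
        leibniz_lie _ _ _
      have h2 : ⁅lnb y x j, lnb y x (i + 1)⁆
          = ⁅lnb y x i, lnb y x (j + 1)⁆ - ⁅⁅lnb y x i, lnb y x j⁆, x⁆ := by
        rw [h1]; abel
      rw [← lie_skew, h2, hB i j (by omega), ih (j + 1) (by omega), smul_lie,
        ← lie_skew y (lnb y x K), neg_lie, pow_succ]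
      push_cast
      module
  obtain ⟨m, hm⟩ := hKodd
  have hmm := hC (m + 1) (m + 1) (by omega)
  rw [lie_self] at hmm
  have h0 : ⁅y, lnb y x (K + 1)⁆ + (((m + 1 : ℕ)) : F) • ⁅⁅lnb y x K, y⁆, x⁆ = 0 := by
    rcases smul_eq_zero.mp hmm.symm with h | h
    · exact absurd h (pow_ne_zero _ (by norm_num))
    · exact h
  have hz : ⁅y, lnb y x (K + 1)⁆ = -⁅⁅lnb y x K, x⁆, y⁆ := (lie_skew _ _).symm
  rw [hz, neg_add_eq_zero] at h0
  have harith : (K + 2 - 1) / 2 = m + 1 := by omega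
  rw [harith]
  exact h0
end

section
/- Let L be a thin Lie algebra over a field F with second diamond L_k and k > 3, with setup elements x, y satisfying [y x^i y] = 0 for 0 ≤ i < k−2. Then the integer (k−1)/2 is nonzero as an element of F; that is, if F has prime characteristic p then p does not divide (k−1)/2 (so k ≢ 1 (mod p) if p ≠ 2, and k ≡ −1 (mod 4) if p = 2). -/
/-- The integer `(k−1)/2` is nonzero as an element of `F`. -/
theorem half_k_sub_one_ne_zero {F : Type*} [Field F] {L : Type*} [LieRing L] [LieAlgebra F L]
    (Lc : ℕ → Submodule F L) (hL : IsThinGrading F L Lc)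
    (k : ℕ) (hk : IsSecondDiamond Lc k)
    (x y : L) (hsetup : ThinSetup Lc x y k) :
    ((((k - 1) / 2 : ℕ) : F)) ≠ 0 := by
  classical
  have hk4 : 3 < k := hsetup.k_gt
  obtain ⟨K, rfl⟩ : ∃ K, k = K + 4 := ⟨k - 4, by omega⟩
  set u : ℕ → L := lnb y x with hu
  have hux : ∀ n, u (n + 1) = ⁅u n, x⁆ := fun n => rfl
  have humem : ∀ n, u n ∈ Lc (n + 1) := by
    intro n
    induction n with
    | zero => exact hsetup.y_mem
    | succ n ih => rw [hux n]; exact hL.bracket_mem (n + 1) 1 _ ih x hsetup.x_mem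
  have hy0 : y ≠ 0 := by
    have h := hsetup.indep.ne_zero 1
    simpa using h
  -- Lc 1 = span {x, y}
  have hfin1 : FiniteDimensional F (Lc 1) :=
    FiniteDimensional.of_finrank_pos (by rw [hL.dim_one]; norm_num)
  have hL1 : Lc 1 = Submodule.span F {x, y} := by
    have hle : Submodule.span F {x, y} ≤ Lc 1 := by
      rw [Submodule.span_le]
      rintro a (rfl | rfl)
      · exact hsetup.x_mem
      · exact hsetup.y_mem
    have hr : Set.range ![x, y] = {x, y} := by
      simp only [Matrix.range_cons, Matrix.range_empty, Set.union_empty, Set.union_singleton]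
      exact Set.pair_comm y x
    have hfr : Module.finrank F (Submodule.span F ({x, y} : Set L)) = 2 := by
      rw [← hr, finrank_span_eq_card hsetup.indep]
      simp
    exact (Submodule.eq_of_le_of_finrank_le hle (by rw [hL.dim_one, hfr])).symm
  -- covering property, pair form
  have hcov : ∀ N : ℕ, 1 ≤ N → ∀ z, z ∈ Lc N → z ≠ 0 →
      Lc (N + 1) = Submodule.span F {⁅z, x⁆, ⁅z, y⁆} := by
    intro N hN z hz hz0
    rw [← hL.covering N hN z hz hz0]
    apply le_antisymm
    · rw [Submodule.span_le]
      rintro a ⟨v, hv, rfl⟩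
      rw [hL1, Submodule.mem_span_pair] at hv
      obtain ⟨a, b, rfl⟩ := hv
      rw [lie_add, lie_smul, lie_smul]
      exact Submodule.add_mem _
        (Submodule.smul_mem _ _ (Submodule.subset_span (Set.mem_insert _ _)))
        (Submodule.smul_mem _ _ (Submodule.subset_span (Set.mem_insert_of_mem _ rfl)))
    · rw [Submodule.span_le]
      rintro a (rfl | rfl)
      · exact Submodule.subset_span ⟨x, hsetup.x_mem, rfl⟩
      · exact Submodule.subset_span ⟨y, hsetup.y_mem, rfl⟩
  have span_pair_zero : ∀ a : L, Submodule.span F {a, (0 : L)} = Submodule.span F {a} := by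
    intro a
    rw [Set.pair_comm, Submodule.span_insert_zero]
  have ne_of_span : ∀ N : ℕ, 1 ≤ N → ∀ a : L, Lc N = Submodule.span F {a} → a ≠ 0 := by
    intro N hN a hspan ha
    apply hL.nonzero N hN
    rw [hspan, ha, Submodule.span_zero_singleton]
  have hch : ∀ i, i ≤ K + 1 → ⁅u i, y⁆ = 0 := fun i hi => hsetup.chain i (by omega)
  -- one-dimensional components
  have hdim1 : ∀ j, j ≤ K + 1 → (u (j + 1) ≠ 0 ∧ Lc (j + 2) = Submodule.span F {u (j + 1)}) := by
    intro j
    induction j with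
    | zero =>
      intro _
      have h2 : Lc 2 = Submodule.span F {⁅y, x⁆, ⁅y, y⁆} := hcov 1 le_rfl y hsetup.y_mem hy0
      rw [lie_self] at h2
      have h2' : Lc 2 = Submodule.span F {u 1} := by
        rw [h2, span_pair_zero]; rfl
      exact ⟨ne_of_span 2 (by omega) _ h2', h2'⟩
    | succ j ih =>
      intro hj
      obtain ⟨hne, _⟩ := ih (by omega)
      have hc : Lc (j + 3) = Submodule.span F {⁅u (j+1), x⁆, ⁅u (j+1), y⁆} :=
        hcov (j + 2) (by omega) (u (j + 1)) (humem (j + 1)) hne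
      rw [hch (j + 1) (by omega), ← hux, span_pair_zero] at hc
      exact ⟨ne_of_span _ (by omega) _ hc, hc⟩
  have hu2ne : u (K + 2) ≠ 0 := (hdim1 (K + 1) le_rfl).1
  set w : L := ⁅u (K + 2), y⁆ with hw
  have hwmem : w ∈ Lc (K + 4) := hL.bracket_mem (K + 3) 1 _ (humem (K + 2)) y hsetup.y_mem
  have hLk : Lc (K + 4) = Submodule.span F {u (K + 3), w} := by
    have h := hcov (K + 3) (by omega) (u (K + 2)) (humem (K + 2)) hu2ne
    rw [← hux, ← hw] at h
    exact h
  have hrk : Module.finrank F (Lc (K + 4)) = 2 := hk.1.2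
  have not_single : ∀ a : L, ¬(Lc (K + 4) ≤ Submodule.span F {a}) := by
    intro a hle
    have h2 : Module.finrank F (Lc (K + 4)) ≤ Module.finrank F (Submodule.span F {a}) :=
      Submodule.finrank_mono hle
    rcases eq_or_ne a 0 with rfl | ha
    · rw [Submodule.span_zero_singleton] at h2
      simp [hrk] at h2
    · rw [finrank_span_singleton ha] at h2
      omega
  have hwne : w ≠ 0 := by
    intro h
    apply not_single (u (K + 3))
    rw [hLk, h, span_pair_zero]
  have hu3ne : u (K + 3) ≠ 0 := by
    intro h
    apply not_single w
    rw [hLk, h, Set.pair_comm, span_pair_zero]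
  have hnotmul : ∀ c : F, w - c • u (K + 3) ≠ 0 := by
    intro c h
    rw [sub_eq_zero] at h
    apply not_single (u (K + 3))
    rw [hLk, Submodule.span_le]
    rintro a (rfl | rfl)
    · exact Submodule.subset_span rfl
    · rw [h]
      exact Submodule.smul_mem _ _ (Submodule.subset_span rfl)
  -- metabelian relations
  have hM : ∀ j i, 1 ≤ i → i + j ≤ K → ⁅u i, u (j + 1)⁆ = 0 := by
    intro j
    induction j with
    | zero =>
      intro i hi1 hiK
      have h1 : u 1 = ⁅y, x⁆ := rfl
      rw [h1, leibniz_lie, hch i (by omega), zero_lie, zero_add, ← hux, ← lie_skew,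
        hch (i + 1) (by omega), neg_zero]
    | succ j ih =>
      intro i hi1 hiK
      rw [hux (j + 1), leibniz_lie, ih i hi1 (by omega), zero_lie, zero_add, ← hux,
        ← lie_skew, ih (i + 1) (by omega) (by omega), neg_zero]
  -- the degree-k relations
  have hG : ∀ r, r ≤ K → ⁅u (r + 1), u (K + 1 - r)⁆ = ((-1 : F) ^ r) • w := by
    intro r
    induction r with
    | zero =>
      intro _
      rw [Nat.sub_zero, pow_zero, one_smul, ← lie_skew]
      have h1 : ⁅u (K + 1), u 1⁆ = -w := by
        have h2 : u 1 = ⁅y, x⁆ := rfl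
        rw [h2, leibniz_lie, hch (K + 1) le_rfl, zero_lie, zero_add, ← hux, ← lie_skew, ← hw]
      rw [h1, neg_neg]
    | succ r ih =>
      intro hr
      have hrK : r ≤ K := by omega
      have e2 : K + 1 - (r + 1) = K - r := by omega
      have e1 : K + 1 - r = (K - r) + 1 := by omega
      have e3 : K - r = (K - (r + 1)) + 1 := by omega
      have hrel : ⁅u (r + 1), u (K + 1 - r)⁆ = -⁅u (r + 1 + 1), u (K - r)⁆ := by
        rw [e1, hux (K - r), leibniz_lie]
        rw [show (⁅u (r + 1), u (K - r)⁆ : L) = 0 from by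
          rw [e3]; exact hM (K - (r + 1)) (r + 1) (by omega) (by omega)]
        rw [zero_lie, zero_add, ← hux, ← lie_skew]
      have h4 : ⁅u (r + 1 + 1), u (K - r)⁆ = -((-1 : F) ^ r • w) := by
        rw [← ih hrK, hrel, neg_neg]
      rw [e2, h4, pow_succ]
      module
  set X : L := ⁅w, x⁆ with hX
  set T0 : L := ⁅u 1, u (K + 2)⁆ with hT0
  have hTform : ∀ r, r ≤ K + 1 →
      ⁅u (r + 1), u (K + 2 - r)⁆ = ((-1 : F) ^ r) • (T0 - (r : F) • X) := by
    intro r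
    induction r with
    | zero =>
      intro _
      rw [Nat.sub_zero, pow_zero, one_smul, Nat.cast_zero, zero_smul, sub_zero, ← hT0]
    | succ r ih =>
      intro hr
      have hrK : r ≤ K := by omega
      have e2 : K + 2 - (r + 1) = K + 1 - r := by omega
      have e1 : K + 2 - r = (K + 1 - r) + 1 := by omega
      have hrec : ⁅u (r + 1), u (K + 2 - r)⁆ = ((-1 : F) ^ r) • X - ⁅u (r + 1 + 1), u (K + 1 - r)⁆ := by
        rw [e1, hux (K + 1 - r), leibniz_lie, hG r hrK, smul_lie, ← hX, ← hux, ← lie_skew,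
          sub_eq_add_neg]
      have h5 : ⁅u (r + 1 + 1), u (K + 1 - r)⁆
          = ((-1 : F) ^ r) • X - ((-1 : F) ^ r) • (T0 - (r : F) • X) := by
        rw [← ih (by omega : r ≤ K + 1), hrec]
        abel
      rw [e2, h5, pow_succ]
      push_cast
      module
  set A : L := ⁅u (K + 3), y⁆ with hA
  have hT0eq : T0 = A - X := by
    have h1 : ⁅u (K + 2), u 1⁆ = X - A := by
      have h2 : u 1 = ⁅y, x⁆ := rfl
      rw [h2, leibniz_lie, ← hw, ← hX, ← hux, ← lie_skew, ← hA, sub_eq_add_neg]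
    rw [hT0, ← lie_skew, h1, neg_sub]
  have hB : ⁅w, y⁆ = 0 := by
    have hw1 : w = ⁅u 1, u (K + 1)⁆ := by
      have h := hG 0 (Nat.zero_le K)
      rw [Nat.sub_zero, pow_zero, one_smul] at h
      exact h.symm
    rw [hw1, lie_lie, hch (K + 1) le_rfl, hch 1 (by omega), lie_zero, lie_zero, sub_zero]
  rcases Nat.even_or_odd K with hKe | hKo
  · -- K even: hypotheses are contradictory
    exfalso
    obtain ⟨s, rfl⟩ := hKe
    -- char 2
    have hGK := hG (s + s) le_rfl
    rw [show s + s + 1 - (s + s) = 1 from by omega, Even.neg_one_pow ⟨s, rfl⟩, one_smul] at hGK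
    have hG0 := hG 0 (Nat.zero_le _)
    rw [Nat.sub_zero, pow_zero, one_smul, Nat.zero_add] at hG0
    have h2w : w = -w := by
      conv_lhs => rw [← hGK]
      rw [← lie_skew, hG0]
    have h2 : (2 : F) • w = 0 := by
      rw [two_smul]
      nth_rewrite 1 [h2w]
      rw [neg_add_cancel]
    have hchar2 : (2 : F) = 0 := by
      rcases smul_eq_zero.mp h2 with h | h
      · exact h
      · exact absurd h hwne
    -- X = 0
    have hT := hTform (s + s + 1) le_rfl
    rw [show s + s + 2 - (s + s + 1) = 1 from by omega] at hT
    have hskew : ⁅u (s + s + 1 + 1), u 1⁆ = -T0 := by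
      rw [hT0, lie_skew]
    rw [hskew, Odd.neg_one_pow ⟨s, by omega⟩, neg_one_smul] at hT
    have hT' : T0 = T0 - ((s + s + 1 : ℕ) : F) • X := neg_injective hT
    have hcX : ((s + s + 1 : ℕ) : F) • X = 0 := by
      have := hT'.symm
      rwa [sub_eq_self] at this
    have hcoef : ((s + s + 1 : ℕ) : F) = 1 := by
      push_cast
      linear_combination (s : F) * hchar2
    rw [hcoef, one_smul] at hcX
    -- contradiction with covering from w
    have hcw := hcov (s + s + 4) (by omega) w hwmem hwne
    rw [← hX, hB, hcX] at hcw
    apply hL.nonzero (s + s + 5) (by omega)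
    rw [hcw, Set.pair_eq_singleton, Submodule.span_zero_singleton]
  · obtain ⟨s, rfl⟩ := hKo
    have hgoal : (2 * s + 1 + 4 - 1) / 2 = s + 2 := by omega
    rw [hgoal]
    intro h0
    -- A = 0
    have hT := hTform (s + 1) (by omega)
    rw [show 2 * s + 1 + 2 - (s + 1) = s + 2 from by omega,
      show s + 1 + 1 = s + 2 from rfl, lie_self] at hT
    have hz : T0 - ((s + 1 : ℕ) : F) • X = 0 := by
      rcases smul_eq_zero.mp hT.symm with h | h
      · exact absurd h (pow_ne_zero _ (by norm_num))
      · exact h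
    have hT0X : T0 = ((s + 1 : ℕ) : F) • X := sub_eq_zero.mp hz
    have hA2 : A = ((s + 2 : ℕ) : F) • X := by
      rw [hT0eq] at hT0X
      have h6 : A = ((s + 1 : ℕ) : F) • X + X := by
        rw [← hT0X]; abel
      rw [h6]
      push_cast
      module
    have hA0 : A = 0 := by
      rw [hA2, h0, zero_smul]
    -- X spans Lc (K+5) and is a multiple of u (K+4)
    have hcw := hcov (2 * s + 1 + 4) (by omega) w hwmem hwne
    rw [← hX, hB, span_pair_zero] at hcw
    have hXne : X ≠ 0 := ne_of_span (2 * s + 1 + 4 + 1) (by omega) X hcw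
    have hcu := hcov (2 * s + 1 + 4) (by omega) (u (2 * s + 1 + 3)) (humem _) hu3ne
    rw [← hux, ← hA, hA0, span_pair_zero] at hcu
    have hXmem : X ∈ Lc (2 * s + 1 + 4 + 1) := by
      rw [hcw]
      exact Submodule.mem_span_singleton_self X
    rw [hcu] at hXmem
    obtain ⟨c, hc⟩ := Submodule.mem_span_singleton.mp hXmem
    -- the bad element z
    have hzmem : w - c • u (2 * s + 1 + 3) ∈ Lc (2 * s + 1 + 4) :=
      Submodule.sub_mem _ hwmem (Submodule.smul_mem _ _ (humem _))
    have hzx : ⁅w - c • u (2 * s + 1 + 3), x⁆ = 0 := by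
      rw [sub_lie, smul_lie, ← hux, ← hX, hc, sub_self]
    have hzy : ⁅w - c • u (2 * s + 1 + 3), y⁆ = 0 := by
      rw [sub_lie, smul_lie, ← hA, hA0, hB, smul_zero, sub_zero]
    have hcz := hcov (2 * s + 1 + 4) (by omega) _ hzmem (hnotmul c)
    rw [hzx, hzy] at hcz
    apply hL.nonzero (2 * s + 1 + 4 + 1) (by omega)
    rw [hcz, Set.pair_eq_singleton, Submodule.span_zero_singleton]
end
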